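/- Let G, R, S be relations on the real Hilbert space H = L²([0,∞); ℝ). Suppose G is 1-input strictly incrementally positive, R has incremental secant gain λ > 0, and S has incremental secant gain σ > 0. Then the relation (G + (R + S)⁻¹)⁻¹ has incremental secant gain 1/(1 + 1/(λ + σ)). -/

import Mathlib

open MeasureTheory RealInnerProductSpace

noncomputable section

/-- The real Hilbert space `H = L²([0,∞); ℝ)`. -/
abbrev H : Type := Lp ℝ 2 (volume.restrict (Set.Ici (0:ℝ)))

/-- The sum of two relations: `A + B = {(x, y + z) : (x, y) ∈ A, (x, z) ∈ B}`. -/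
def relAdd (A B : Set (H × H)) : Set (H × H) :=
  {p | ∃ y z : H, (p.1, y) ∈ A ∧ (p.1, z) ∈ B ∧ p.2 = y + z}

/-- The relational inverse `A⁻¹ = {(y, u) : (u, y) ∈ A}`. -/
def relInv (A : Set (H × H)) : Set (H × H) := {p | (p.2, p.1) ∈ A}

/-- `A` is `μ`-input strictly incrementally positive (`μ`-coercive). -/
def InputStrictlyPositive (A : Set (H × H)) (μ : ℝ) : Prop :=
  ∀ u₁ y₁ u₂ y₂ : H, (u₁, y₁) ∈ A → (u₂, y₂) ∈ A →
    ⟪u₁ - u₂, y₁ - y₂⟫ ≥ μ * ‖u₁ - u₂‖ ^ 2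

/-- `A` has incremental secant gain `γ` (is `1/γ`-output strictly incrementally
positive, i.e. `(1/γ)`-cocoercive). -/
def HasSecantGain (A : Set (H × H)) (γ : ℝ) : Prop :=
  ∀ u₁ y₁ u₂ y₂ : H, (u₁, y₁) ∈ A → (u₂, y₂) ∈ A →
    γ * ⟪u₁ - u₂, y₁ - y₂⟫ ≥ ‖y₁ - y₂‖ ^ 2

/-!
Inverting a relation exchanges `γ`-cocoercivity (secant gain `γ`) with `1/γ`-coercivity,
coercivity moduli add under a parallel sum, and secant gains add under a parallel sum by a
weighted Cauchy–Schwarz inequality. Hence `(R + S)⁻¹` is `1/(λ + σ)`-coercive,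
`G + (R + S)⁻¹` is `(1 + 1/(λ + σ))`-coercive, and its inverse has the reciprocal gain.
-/

/-- Weighted Cauchy–Schwarz, `(a + b)² ≤ (λ + σ) (a²/λ + b²/σ)`: times `λσ`, the difference
of the two sides is `(σ a - λ b)²`. -/
theorem sq_add_le_mul_add_of_sq_le_mul {a b p q lam σ : ℝ} (hlam : 0 < lam) (hσ : 0 < σ)
    (ha : a ^ 2 ≤ lam * p) (hb : b ^ 2 ≤ σ * q) : (a + b) ^ 2 ≤ (lam + σ) * (p + q) := by
  have hlamσ : 0 < lam * σ := mul_pos hlam hσ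
  refine le_of_mul_le_mul_left ?_ hlamσ
  nlinarith [sq_nonneg (σ * a - lam * b),
    mul_le_mul_of_nonneg_left ha (by positivity : 0 ≤ σ * (lam + σ)),
    mul_le_mul_of_nonneg_left hb (by positivity : 0 ≤ lam * (lam + σ))]

theorem InputStrictlyPositive.relAdd {A B : Set (H × H)} {μ ν : ℝ}
    (hA : InputStrictlyPositive A μ) (hB : InputStrictlyPositive B ν) :
    InputStrictlyPositive (relAdd A B) (μ + ν) := by
  rintro u₁ - u₂ - ⟨a₁, b₁, ha₁, hb₁, rfl⟩ ⟨a₂, b₂, ha₂, hb₂, rfl⟩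
  rw [add_sub_add_comm, inner_add_right, add_mul]
  exact add_le_add (hA _ _ _ _ ha₁ ha₂) (hB _ _ _ _ hb₁ hb₂)

theorem HasSecantGain.relAdd {A B : Set (H × H)} {lam σ : ℝ} (hlam : 0 < lam) (hσ : 0 < σ)
    (hA : HasSecantGain A lam) (hB : HasSecantGain B σ) :
    HasSecantGain (relAdd A B) (lam + σ) := by
  rintro u₁ - u₂ - ⟨a₁, b₁, ha₁, hb₁, rfl⟩ ⟨a₂, b₂, ha₂, hb₂, rfl⟩
  rw [add_sub_add_comm, inner_add_right]
  calc ‖a₁ - a₂ + (b₁ - b₂)‖ ^ 2 ≤ (‖a₁ - a₂‖ + ‖b₁ - b₂‖) ^ 2 := by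
        gcongr; exact norm_add_le _ _
    _ ≤ (lam + σ) * (⟪u₁ - u₂, a₁ - a₂⟫ + ⟪u₁ - u₂, b₁ - b₂⟫) :=
        sq_add_le_mul_add_of_sq_le_mul hlam hσ (hA _ _ _ _ ha₁ ha₂) (hB _ _ _ _ hb₁ hb₂)

theorem HasSecantGain.relInv {A : Set (H × H)} {γ : ℝ} (hγ : 0 < γ) (hA : HasSecantGain A γ) :
    InputStrictlyPositive (relInv A) (1 / γ) := by
  intro y₁ u₁ y₂ u₂ h₁ h₂
  rw [real_inner_comm, ge_iff_le, one_div_mul_eq_div, div_le_iff₀ hγ, mul_comm]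
  exact hA _ _ _ _ h₁ h₂

theorem InputStrictlyPositive.relInv {A : Set (H × H)} {μ : ℝ} (hμ : 0 < μ)
    (hA : InputStrictlyPositive A μ) : HasSecantGain (relInv A) (1 / μ) := by
  intro y₁ u₁ y₂ u₂ h₁ h₂
  rw [real_inner_comm, ge_iff_le, one_div_mul_eq_div, le_div_iff₀ hμ, mul_comm]
  exact hA _ _ _ _ h₁ h₂

theorem unit_recursion_secant_gain (G R S : Set (H × H)) (lam σ : ℝ)
    (hlam : 0 < lam) (hσ : 0 < σ)
    (hG : InputStrictlyPositive G 1)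
    (hR : HasSecantGain R lam) (hS : HasSecantGain S σ) :
    HasSecantGain (relInv (relAdd G (relInv (relAdd R S)))) (1 / (1 + 1 / (lam + σ))) := by
  have hgain : 0 < lam + σ := add_pos hlam hσ
  have hRS : InputStrictlyPositive (relInv (relAdd R S)) (1 / (lam + σ)) :=
    (hR.relAdd hlam hσ hS).relInv hgain
  exact (hG.relAdd hRS).relInv (by positivity)
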